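/- arXiv:1605.03833 — 3 statements merged into one kernel-verified Lean document; each statement's English description precedes it below -/
import Mathlib

section
/- Let C ≥ 1 and let φ ∈ GL(E) satisfy ‖φ‖ ≤ C and ‖φ⁻¹‖ ≤ C. Then the map induced by φ on the projective space P(E) is C²-Lipschitz for the angle metric: α(φ(x), φ(y)) ≤ C²·α(x, y) for all nonzero x, y ∈ E. -/
/-!
Writing `v` as a multiple of `u` plus a remainder shows that `sin α(u, v) * ‖v‖` is the distance
from `v` to the line `ℝ u`. Applying `φ` to the nearest remainder, and comparing `‖v‖` with
`‖φ v‖` through `φ⁻¹`, gives the local estimate `sin α(φ u, φ v) ≤ C² sin α(u, v)`.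
To globalize it, cut the great-circle arc from `x` to `y` into `n` arcs of angle `α(x, y) / n`:
each image arc has angle at most `arcsin (C² α(x, y) / n)`, so by the triangle inequality for `α`
(inherited from the one for unoriented angles after a choice of signs)
`α(φ x, φ y) ≤ n * arcsin (C² α(x, y) / n)`, which tends to `C² α(x, y)`.
-/

open scoped RealInnerProductSpace

noncomputable section

variable {E : Type*} [NormedAddCommGroup E] [InnerProductSpace ℝ E] [FiniteDimensional ℝ E]

/-- The angle `α(x, y) = arccos (|⟨x,y⟫| / (‖x‖ ‖y‖))` between the lines spanned by `x` and
`y`. -/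
noncomputable def lineAngle (x y : E) : ℝ :=
  Real.arccos (|⟪x, y⟫| / (‖x‖ * ‖y‖))

/-- The operator norm of an endomorphism (with respect to the inner product norm). -/
noncomputable def opNorm (f : E →ₗ[ℝ] E) : ℝ :=
  ⨆ x : {x : E // ‖x‖ ≤ 1}, ‖f x.1‖

open Real Filter Topology InnerProductGeometry

section InnerProductSpace

variable {V W : Type*} [NormedAddCommGroup V] [InnerProductSpace ℝ V]
  [NormedAddCommGroup W] [InnerProductSpace ℝ W]

theorem sq_norm_mul_sq_norm_sub_smul (u v : V) (c : ℝ) :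
    ‖u‖ ^ 2 * ‖v - c • u‖ ^ 2 =
      ‖u‖ ^ 2 * (sin (angle u v) * ‖v‖) ^ 2 + (c * ‖u‖ ^ 2 - ⟪u, v⟫) ^ 2 := by
  rw [norm_sub_sq_real, real_inner_smul_right, norm_smul, Real.norm_eq_abs, mul_pow, sq_abs,
    real_inner_comm, ← cos_angle_mul_norm_mul_norm]
  linear_combination (-‖u‖ ^ 2 * ‖v‖ ^ 2) * sin_sq_add_cos_sq (angle u v)

theorem sin_angle_mul_norm_nonneg (u v : V) : 0 ≤ sin (angle u v) * ‖v‖ :=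
  mul_nonneg (sin_angle_nonneg u v) (norm_nonneg v)

theorem sin_angle_mul_norm_le_norm_sub_smul (u v : V) (c : ℝ) :
    sin (angle u v) * ‖v‖ ≤ ‖v - c • u‖ := by
  rcases eq_or_ne u 0 with rfl | hu
  · simp
  have h := sq_norm_mul_sq_norm_sub_smul u v c
  have hsq : (sin (angle u v) * ‖v‖) ^ 2 ≤ ‖v - c • u‖ ^ 2 :=
    le_of_mul_le_mul_left (by nlinarith [sq_nonneg (c * ‖u‖ ^ 2 - ⟪u, v⟫)])
      (by positivity : 0 < ‖u‖ ^ 2)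
  exact (pow_le_pow_iff_left₀ (sin_angle_mul_norm_nonneg u v) (norm_nonneg _) two_ne_zero).1 hsq

theorem exists_norm_sub_smul_eq_sin_angle_mul_norm (u v : V) :
    ∃ c : ℝ, ‖v - c • u‖ = sin (angle u v) * ‖v‖ := by
  rcases eq_or_ne u 0 with rfl | hu
  · exact ⟨0, by simp⟩
  have hu' : ‖u‖ ^ 2 ≠ 0 := by positivity
  refine ⟨⟪u, v⟫ / ‖u‖ ^ 2, (pow_left_inj₀ (norm_nonneg _) (sin_angle_mul_norm_nonneg u v)
    two_ne_zero).1 (mul_left_cancel₀ hu' ?_)⟩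
  have h := sq_norm_mul_sq_norm_sub_smul u v (⟪u, v⟫ / ‖u‖ ^ 2)
  rwa [div_mul_cancel₀ _ hu', sub_self, zero_pow two_ne_zero, add_zero] at h

theorem sin_angle_map_le (f : V →ₗ[ℝ] W) {K L : ℝ} (hK : ∀ w, ‖f w‖ ≤ K * ‖w‖) (u : V) {v : V}
    (hv : f v ≠ 0) (hL : ‖v‖ ≤ L * ‖f v‖) :
    sin (angle (f u) (f v)) ≤ K * L * sin (angle u v) := by
  have hfv : 0 < ‖f v‖ := norm_pos_iff.2 hv
  have hK0 : 0 ≤ K := (pos_of_mul_pos_left (hfv.trans_le (hK v)) (norm_nonneg v)).le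
  obtain ⟨c, hc⟩ := exists_norm_sub_smul_eq_sin_angle_mul_norm u v
  refine le_of_mul_le_mul_right ?_ hfv
  calc sin (angle (f u) (f v)) * ‖f v‖ ≤ ‖f v - c • f u‖ :=
        sin_angle_mul_norm_le_norm_sub_smul _ _ c
    _ = ‖f (v - c • u)‖ := by rw [map_sub, map_smul]
    _ ≤ K * ‖v - c • u‖ := hK _
    _ = K * sin (angle u v) * ‖v‖ := by rw [hc, mul_assoc]
    _ ≤ K * sin (angle u v) * (L * ‖f v‖) := by gcongr; exact mul_nonneg hK0 (sin_angle_nonneg u v)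
    _ = K * L * sin (angle u v) * ‖f v‖ := by ring

theorem lineAngle_eq_angle_of_inner_nonneg {x y : V} (h : 0 ≤ ⟪x, y⟫) :
    lineAngle x y = angle x y := by
  rw [lineAngle, abs_of_nonneg h, angle]

theorem lineAngle_neg_left (x y : V) : lineAngle (-x) y = lineAngle x y := by
  simp [lineAngle]

theorem lineAngle_neg_right (x y : V) : lineAngle x (-y) = lineAngle x y := by
  simp [lineAngle]

theorem lineAngle_smul_smul {a b : ℝ} (ha : a ≠ 0) (hb : b ≠ 0) (x y : V) :
    lineAngle (a • x) (b • y) = lineAngle x y := by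
  simp only [lineAngle, real_inner_smul_left, real_inner_smul_right, norm_smul, Real.norm_eq_abs,
    abs_mul]
  congr 1
  field_simp

theorem lineAngle_nonneg (x y : V) : 0 ≤ lineAngle x y := arccos_nonneg _

theorem lineAngle_le_pi_div_two (x y : V) : lineAngle x y ≤ π / 2 :=
  arccos_le_pi_div_two.2 (by positivity)

theorem lineAngle_self {x : V} (hx : x ≠ 0) : lineAngle x x = 0 := by
  rw [lineAngle_eq_angle_of_inner_nonneg real_inner_self_nonneg, angle_self hx]

theorem lineAngle_le_angle (x y : V) : lineAngle x y ≤ angle x y :=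
  arccos_le_arccos (div_le_div_of_nonneg_right (le_abs_self _) (by positivity))

theorem exists_lineAngle_eq_angle (x y : V) :
    ∃ y', (y' = y ∨ y' = -y) ∧ lineAngle x y = angle x y' := by
  rcases le_total 0 ⟪x, y⟫ with h | h
  · exact ⟨y, .inl rfl, lineAngle_eq_angle_of_inner_nonneg h⟩
  · refine ⟨-y, .inr rfl, ?_⟩
    rw [← lineAngle_neg_right, lineAngle_eq_angle_of_inner_nonneg (by rwa [inner_neg_right,
      neg_nonneg])]

theorem sin_lineAngle (x y : V) : sin (lineAngle x y) = sin (angle x y) := by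
  obtain ⟨y', rfl | rfl, h⟩ := exists_lineAngle_eq_angle x y
  · rw [h]
  · rw [h, angle_neg_right, sin_pi_sub]

theorem lineAngle_le_lineAngle_add_lineAngle (a b c : V) :
    lineAngle a c ≤ lineAngle a b + lineAngle b c := by
  obtain ⟨b', hb', hab⟩ := exists_lineAngle_eq_angle a b
  obtain ⟨c', hc', hbc⟩ := exists_lineAngle_eq_angle b' c
  have hb'c : lineAngle b' c = lineAngle b c := by
    rcases hb' with rfl | rfl <;> simp only [lineAngle_neg_left]
  have hac' : lineAngle a c' = lineAngle a c := by
    rcases hc' with rfl | rfl <;> simp only [lineAngle_neg_right]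
  calc lineAngle a c = lineAngle a c' := hac'.symm
    _ ≤ angle a c' := lineAngle_le_angle a c'
    _ ≤ angle a b' + angle b' c' := angle_le_angle_add_angle a b' c'
    _ = lineAngle a b + lineAngle b c := by rw [← hab, ← hbc, hb'c]

theorem lineAngle_le_sum_range (v : ℕ → V) (h0 : v 0 ≠ 0) (n : ℕ) :
    lineAngle (v 0) (v n) ≤ ∑ i ∈ Finset.range n, lineAngle (v i) (v (i + 1)) := by
  induction n with
  | zero => simp [lineAngle_self h0]
  | succ n ih =>
    rw [Finset.sum_range_succ]
    exact (lineAngle_le_lineAngle_add_lineAngle _ (v n) _).trans (by gcongr)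

theorem lineAngle_le_arcsin_of_sin_le {x y : V} {t : ℝ} (h : sin (lineAngle x y) ≤ t) :
    lineAngle x y ≤ arcsin t := by
  calc lineAngle x y = arcsin (sin (lineAngle x y)) :=
        (arcsin_sin (by linarith [pi_pos, lineAngle_nonneg x y]) (lineAngle_le_pi_div_two x y)).symm
    _ ≤ arcsin t := monotone_arcsin h

theorem exists_inner_eq_cos_sub {x y : V} (hx : ‖x‖ = 1) (hy : ‖y‖ = 1) (h0 : 0 < angle x y)
    (hπ : angle x y < π) :
    ∃ γ : ℝ → V, (∀ s t, ⟪γ s, γ t⟫ = cos (s - t)) ∧ γ 0 = x ∧ γ (angle x y) = y := by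
  set α := angle x y
  have hsin : sin α ≠ 0 := (sin_pos_of_pos_of_lt_pi h0 hπ).ne'
  have hxy : ⟪x, y⟫ = cos α := by simpa [hx, hy] using (cos_angle_mul_norm_mul_norm x y).symm
  have hxx : ⟪x, x⟫ = 1 := by rw [real_inner_self_eq_norm_sq, hx, one_pow]
  have hyy : ⟪y, y⟫ = 1 := by rw [real_inner_self_eq_norm_sq, hy, one_pow]
  set w := y - cos α • x
  have hxw : ⟪x, w⟫ = 0 := by
    simp only [w, inner_sub_right, real_inner_smul_right, hxy, hxx]; ring
  have hww : ⟪w, w⟫ = sin α ^ 2 := by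
    simp only [w, inner_sub_left, inner_sub_right, real_inner_smul_left, real_inner_smul_right,
      hxx, hyy, hxy, real_inner_comm x y]
    linear_combination -sin_sq_add_cos_sq α
  refine ⟨fun t => cos t • x + (sin t / sin α) • w, fun s t => ?_, by simp, ?_⟩
  · simp only [inner_add_left, inner_add_right, real_inner_smul_left, real_inner_smul_right, hxx,
      hxw, real_inner_comm x w, hww, cos_sub]
    field_simp
    ring
  · simp [div_self hsin, w]

theorem norm_eq_one_of_inner_eq_cos_sub {γ : ℝ → V} (hγ : ∀ s t, ⟪γ s, γ t⟫ = cos (s - t))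
    (t : ℝ) : ‖γ t‖ = 1 := by
  rw [norm_eq_sqrt_real_inner, hγ, sub_self, cos_zero, sqrt_one]

theorem angle_add_eq_of_inner_eq_cos_sub {γ : ℝ → V} (hγ : ∀ s t, ⟪γ s, γ t⟫ = cos (s - t))
    (t : ℝ) {δ : ℝ} (h0 : 0 ≤ δ) (hπ : δ ≤ π) : angle (γ t) (γ (t + δ)) = δ := by
  rw [angle, hγ, norm_eq_one_of_inner_eq_cos_sub hγ, norm_eq_one_of_inner_eq_cos_sub hγ, mul_one,
    div_one, sub_add_cancel_left, cos_neg, arccos_cos h0 hπ]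

theorem tendsto_natCast_mul_arcsin_div (c : ℝ) :
    Tendsto (fun n : ℕ => n * arcsin (c / n)) atTop (𝓝 c) := by
  have hd : HasDerivAt (fun t => arcsin (c * t)) c 0 := by
    have h1 : HasDerivAt arcsin 1 (c * id 0) := by
      simpa using hasDerivAt_arcsin (x := c * id 0) (by simp) (by simp)
    simpa using! h1.comp (0 : ℝ) ((hasDerivAt_id 0).const_mul c)
  refine (hd.tendsto_slope_zero_right.comp
    (tendsto_inv_atTop_nhdsGT_zero.comp tendsto_natCast_atTop_atTop)).congr fun n => ?_
  simp [div_eq_mul_inv]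

theorem lineAngle_map_le_mul_angle_of_norm_eq_one (f : V →ₗ[ℝ] W) (hf : Function.Injective f)
    {K : ℝ} (hK0 : 0 ≤ K)
    (hK : ∀ u v, v ≠ 0 → sin (lineAngle (f u) (f v)) ≤ K * sin (lineAngle u v))
    {x y : V} (hx : ‖x‖ = 1) (hy : ‖y‖ = 1) (h0 : 0 < angle x y) (hπ : angle x y < π) :
    lineAngle (f x) (f y) ≤ K * angle x y := by
  obtain ⟨γ, hγ, hγ0, hγα⟩ := exists_inner_eq_cos_sub hx hy h0 hπ
  set α := angle x y
  have hγ_ne : ∀ t, γ t ≠ 0 := fun t => by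
    rw [← norm_ne_zero_iff, norm_eq_one_of_inner_eq_cos_sub hγ]
    exact one_ne_zero
  have hbound : ∀ n : ℕ, 0 < n → lineAngle (f x) (f y) ≤ n * arcsin (K * α / n) := by
    intro n hn
    have hn' : (0 : ℝ) < n := Nat.cast_pos.2 hn
    set w : ℕ → V := fun i => γ (i * α / n)
    have hpiece : ∀ i, lineAngle (f (w i)) (f (w (i + 1))) ≤ arcsin (K * α / n) := by
      intro i
      have hδ : lineAngle (w i) (w (i + 1)) ≤ α / n := by
        refine (lineAngle_le_angle _ _).trans_eq ?_
        convert angle_add_eq_of_inner_eq_cos_sub hγ (i * α / n) (by positivity : 0 ≤ α / n)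
          ((div_le_self h0.le (by exact_mod_cast hn)).trans hπ.le) using 3
        push_cast; ring
      refine lineAngle_le_arcsin_of_sin_le ((hK _ _ (hγ_ne _)).trans ?_)
      calc K * sin (lineAngle (w i) (w (i + 1))) ≤ K * (α / n) := by
            gcongr; exact (sin_le (lineAngle_nonneg _ _)).trans hδ
        _ = K * α / n := by ring
    have hw0 : w 0 = x := by simp [w, hγ0]
    have hwn : w n = y := by simp [w, hn'.ne', hγα]
    calc lineAngle (f x) (f y) = lineAngle (f (w 0)) (f (w n)) := by rw [hw0, hwn]
      _ ≤ ∑ i ∈ Finset.range n, lineAngle (f (w i)) (f (w (i + 1))) :=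
          lineAngle_le_sum_range (fun i => f (w i)) ((map_ne_zero_iff f hf).2 (hγ_ne _)) n
      _ ≤ ∑ _i ∈ Finset.range n, arcsin (K * α / n) := Finset.sum_le_sum fun i _ => hpiece i
      _ = n * arcsin (K * α / n) := by simp
  refine ge_of_tendsto (tendsto_natCast_mul_arcsin_div (K * α)) ?_
  filter_upwards [eventually_gt_atTop 0] with n hn using hbound n hn

theorem lineAngle_map_le_of_sin_le (f : V →ₗ[ℝ] W) (hf : Function.Injective f) {K : ℝ}
    (hK0 : 0 ≤ K) (hK : ∀ u v, v ≠ 0 → sin (lineAngle (f u) (f v)) ≤ K * sin (lineAngle u v))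
    {x y : V} (hx : x ≠ 0) (hy : y ≠ 0) :
    lineAngle (f x) (f y) ≤ K * lineAngle x y := by
  rcases (lineAngle_nonneg x y).eq_or_lt with h0 | h0
  · rw [← h0, mul_zero, ← arcsin_zero]
    exact lineAngle_le_arcsin_of_sin_le ((hK x y hy).trans_eq (by rw [← h0, sin_zero, mul_zero]))
  obtain ⟨y', hy', hxy'⟩ := exists_lineAngle_eq_angle x y
  have hy'0 : y' ≠ 0 := by rcases hy' with rfl | rfl <;> simpa
  have hfy' : lineAngle (f x) (f y') = lineAngle (f x) (f y) := by
    rcases hy' with rfl | rfl <;> simp only [map_neg, lineAngle_neg_right]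
  have hangle : angle (‖x‖⁻¹ • x) (‖y'‖⁻¹ • y') = angle x y' := by
    rw [angle_smul_left_of_pos _ _ (by positivity), angle_smul_right_of_pos _ _ (by positivity)]
  calc lineAngle (f x) (f y) = lineAngle (f (‖x‖⁻¹ • x)) (f (‖y'‖⁻¹ • y')) := by
        rw [map_smul, map_smul, lineAngle_smul_smul (by positivity) (by positivity), hfy']
    _ ≤ K * angle (‖x‖⁻¹ • x) (‖y'‖⁻¹ • y') :=
        lineAngle_map_le_mul_angle_of_norm_eq_one f hf hK0 hK (norm_smul_inv_norm hx)
          (norm_smul_inv_norm hy'0) (by rwa [hangle, ← hxy'])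
          (by rw [hangle, ← hxy']; linarith [lineAngle_le_pi_div_two x y, pi_pos])
    _ = K * lineAngle x y := by rw [hangle, hxy']

end InnerProductSpace

theorem opNorm_eq_norm_toContinuousLinearMap (f : E →ₗ[ℝ] E) :
    opNorm f = ‖LinearMap.toContinuousLinearMap f‖ := by
  rw [← ContinuousLinearMap.sSup_unitClosedBall_eq_norm, sSup_image', opNorm]
  exact Equiv.iSup_congr (Equiv.subtypeEquivRight fun x => mem_closedBall_zero_iff.symm)
    fun _ => rfl

theorem norm_apply_le_opNorm_mul (f : E →ₗ[ℝ] E) (x : E) : ‖f x‖ ≤ opNorm f * ‖x‖ := by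
  rw [opNorm_eq_norm_toContinuousLinearMap]
  exact (LinearMap.toContinuousLinearMap f).le_opNorm x

theorem lipschitz_on_projective_space_general (C : ℝ) (φ : E ≃ₗ[ℝ] E)
    (hφ : opNorm (φ : E →ₗ[ℝ] E) ≤ C) (hφinv : opNorm (φ.symm : E →ₗ[ℝ] E) ≤ C)
    (x y : E) (hx : x ≠ 0) (hy : y ≠ 0) :
    lineAngle (φ x) (φ y) ≤ C ^ 2 * lineAngle x y := by
  have hnorm : ∀ w, ‖φ w‖ ≤ C * ‖w‖ := fun w =>
    (norm_apply_le_opNorm_mul _ w).trans (by gcongr)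
  have hnorm_symm : ∀ w, ‖w‖ ≤ C * ‖φ w‖ := fun w => by
    simpa using (norm_apply_le_opNorm_mul (φ.symm : E →ₗ[ℝ] E) (φ w)).trans (by gcongr)
  have hsin : ∀ u v, v ≠ 0 → sin (lineAngle (φ u) (φ v)) ≤ C ^ 2 * sin (lineAngle u v) :=
    fun u v hv => by
      rw [sin_lineAngle, sin_lineAngle, sq]
      exact sin_angle_map_le (φ : E →ₗ[ℝ] E) hnorm u (φ.map_ne_zero_iff.2 hv) (hnorm_symm v)
  exact lineAngle_map_le_of_sin_le (φ : E →ₗ[ℝ] E) φ.injective (sq_nonneg C) hsin hx hy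

theorem lipschitz_on_projective_space (C : ℝ) (hC : 1 ≤ C) (φ : E ≃ₗ[ℝ] E)
    (hφ : opNorm (φ : E →ₗ[ℝ] E) ≤ C) (hφinv : opNorm (φ.symm : E →ₗ[ℝ] E) ≤ C)
    (x y : E) (hx : x ≠ 0) (hy : y ≠ 0) :
    lineAngle (φ x) (φ y) ≤ C ^ 2 * lineAngle x y :=
  lipschitz_on_projective_space_general C φ hφ hφinv x y hx hy

end
end

section
/- Fix a subset Π' ⊆ Π and a point X ∈ a⁺_{Π'}. Then for every Y ∈ a the following two conditions are equivalent: (i) Y ∈ a⁺_{Π'}, ⟨ϖᵢ, Y⟩ ≤ ⟨ϖᵢ, X⟩ for every i with αᵢ ∈ Π', and ⟨ϖᵢ, Y⟩ = ⟨ϖᵢ, X⟩ for every i with αᵢ ∈ Π ∖ Π'; (ii) Y ∈ a⁺_{Π'} and Y lies in the convex hull of the orbit W_{Π'}·X. -/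
/-!
For `J`-dominant `X` and `w ∈ W_J`, the vector `X - w X` is a nonnegative combination of the
simple roots in `J`. This goes by induction on the length of a word for `w = sᵢ w'`: if
`⟪w' X, αᵢ⟫ ≥ 0` then `X - w X = (X - w' X) + c αᵢ` with `c ≥ 0`; otherwise the root `w'⁻¹ αᵢ`
pairs negatively with `X`, hence is negative, and the deletion condition shortens the word.

The weight conditions say exactly that `X - Y` lies in that cone, so the hull of the orbit
satisfies them. Conversely, if `Y` is outside the hull, separate it from the (finite) orbit by
`v` and move `v` to a dominant `u = w v` by maximising a strictly dominant functional over the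
finite group `W_J`; both `u - v` and `X - Y` lie in the cone and `Y`, `u` are dominant, so
`⟪v, Y⟫ ≤ ⟪u, Y⟫ ≤ ⟪u, X⟫ = ⟪v, w⁻¹ X⟫ < ⟪v, Y⟫`.
-/

open scoped RealInnerProductSpace

noncomputable section

open Set

namespace ParabolicOrbit

variable {V : Type*} [NormedAddCommGroup V] [InnerProductSpace ℝ V]

def rootReflection (a : V) : V ≃ₗ[ℝ] V := (ℝ ∙ a)ᗮ.reflection.toLinearEquiv

theorem rootReflection_apply (a x : V) :
    rootReflection a x = x - (2 * ⟪x, a⟫ / ⟪a, a⟫) • a := by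
  simp only [rootReflection, LinearIsometryEquiv.coe_toLinearEquiv,
    Submodule.reflection_orthogonal_apply, Submodule.reflection_singleton_apply,
    real_inner_self_eq_norm_sq, real_inner_comm a x]
  module

theorem inner_rootReflection_rootReflection (a x y : V) :
    ⟪rootReflection a x, rootReflection a y⟫ = ⟪x, y⟫ :=
  LinearIsometryEquiv.inner_map_map _ x y

theorem rootReflection_mul_self (a : V) : rootReflection a * rootReflection a = 1 :=
  LinearEquiv.ext fun x => Submodule.reflection_reflection _ x

theorem rootReflection_inv (a : V) : (rootReflection a)⁻¹ = rootReflection a :=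
  inv_eq_of_mul_eq_one_right (rootReflection_mul_self a)

theorem rootReflection_rootReflection (a c : V) :
    rootReflection (rootReflection a c) =
      rootReflection a * rootReflection c * rootReflection a := by
  have hinv (y : V) : rootReflection a (rootReflection a y) = y :=
    LinearEquiv.congr_fun (rootReflection_mul_self a) y
  have hx (x : V) : ⟪x, rootReflection a c⟫ = ⟪rootReflection a x, c⟫ := by
    rw [← inner_rootReflection_rootReflection a, hinv]
  ext x
  rw [rootReflection_apply, LinearEquiv.mul_apply, LinearEquiv.mul_apply, rootReflection_apply c,
    map_sub, map_smul, hinv, hx, inner_rootReflection_rootReflection]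

theorem rootReflection_smul {t : ℝ} (ht : t ≠ 0) (a : V) :
    rootReflection (t • a) = rootReflection a := by
  simp only [rootReflection, Submodule.span_singleton_smul_eq (IsUnit.mk0 t ht)]

theorem finite_setOf_mapsTo {S : Set V} (hSfin : S.Finite) (hSspan : Submodule.span ℝ S = ⊤) :
    {w : V ≃ₗ[ℝ] V | MapsTo w S S}.Finite := by
  refine Set.Finite.of_finite_image (f := fun w (x : S) => w x) ?_ fun w₁ _ w₂ _ h =>
    LinearEquiv.toLinearMap_injective (LinearMap.ext_on hSspan fun x hx => congr_fun h ⟨x, hx⟩)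
  have : Finite S := hSfin
  refine (Set.finite_univ (α := S → S)).image (fun g x => (g x : V)) |>.subset ?_
  rintro _ ⟨w, hw, rfl⟩
  exact ⟨fun x => ⟨w x, hw x.2⟩, trivial, rfl⟩

theorem exists_inner_lt_of_notMem_convexHull [CompleteSpace V] {K : Set V} (hK : K.Finite)
    {y : V} (hy : y ∉ convexHull ℝ K) : ∃ v : V, ∀ z ∈ K, ⟪v, z⟫ < ⟪v, y⟫ := by
  obtain ⟨f, u, hfK, hfy⟩ := geometric_hahn_banach_closed_point (convex_convexHull ℝ K)
    (hK.isCompact_convexHull ℝ).isClosed hy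
  refine ⟨(InnerProductSpace.toDual ℝ V).symm f, fun z hz => ?_⟩
  rw [InnerProductSpace.toDual_symm_apply, InnerProductSpace.toDual_symm_apply]
  exact (hfK z (subset_convexHull ℝ K hz)).trans hfy

theorem sign_two_inner_smul_div {t : ℝ} (ht : 0 < t) {a : V} (ha : a ≠ 0) (w : V) :
    SignType.sign (2 * ⟪w, t • a⟫ / ⟪t • a, t • a⟫) = SignType.sign ⟪w, a⟫ := by
  have haa := real_inner_self_pos.mpr ha
  have h : 2 * ⟪w, t • a⟫ / ⟪t • a, t • a⟫ = 2 / (t * ⟪a, a⟫) * ⟪w, a⟫ := by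
    simp only [real_inner_smul_left, real_inner_smul_right]
    field_simp
  rw [h, sign_mul, sign_pos (by positivity), one_mul]

variable {ι : Type*} (b : Module.Basis ι ℝ V)

def reflWord (l : List ι) : V ≃ₗ[ℝ] V := (l.map fun i => rootReflection (b i)).prod

@[simp]
theorem reflWord_nil : reflWord b [] = 1 := rfl

@[simp]
theorem reflWord_cons (i : ι) (l : List ι) :
    reflWord b (i :: l) = rootReflection (b i) * reflWord b l := by
  simp [reflWord]

theorem reflWord_append (l₁ l₂ : List ι) :
    reflWord b (l₁ ++ l₂) = reflWord b l₁ * reflWord b l₂ := by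
  simp [reflWord]

theorem reflWord_reverse (l : List ι) : reflWord b l.reverse = (reflWord b l)⁻¹ := by
  induction l with
  | nil => simp
  | cons i l ih =>
    rw [List.reverse_cons, reflWord_append, ih, reflWord_cons, reflWord_cons, reflWord_nil, mul_one,
      mul_inv_rev, rootReflection_inv]

theorem inner_reflWord_reflWord (l : List ι) (x y : V) :
    ⟪reflWord b l x, reflWord b l y⟫ = ⟪x, y⟫ := by
  induction l with
  | nil => rfl
  | cons i l ih => simp [LinearEquiv.mul_apply, inner_rootReflection_rootReflection, ih]

theorem inner_reflWord_inv_apply (l : List ι) (x y : V) :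
    ⟪(reflWord b l)⁻¹ x, y⟫ = ⟪x, reflWord b l y⟫ := by
  rw [← inner_reflWord_reflWord b l, ← LinearEquiv.mul_apply, mul_inv_cancel]
  rfl

theorem mapsTo_reflWord {S : Set V} (hS : ∀ i, MapsTo (rootReflection (b i)) S S)
    (l : List ι) : MapsTo (reflWord b l) S S := by
  induction l with
  | nil => exact mapsTo_id S
  | cons i l ih => exact (hS i).comp ih

theorem repr_rootReflection_of_ne {i k : ι} (hk : k ≠ i) (x : V) :
    b.repr (rootReflection (b i) x) k = b.repr x k := by
  simp [rootReflection_apply, Finsupp.single_eq_of_ne hk]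

theorem repr_reflWord_of_notMem {J : Set ι} {l : List ι} (hl : ∀ i ∈ l, i ∈ J) {k : ι}
    (hk : k ∉ J) (x : V) : b.repr (reflWord b l x) k = b.repr x k := by
  induction l with
  | nil => rfl
  | cons i l ih =>
    rw [reflWord_cons, LinearEquiv.mul_apply,
      repr_rootReflection_of_ne b (ne_of_mem_of_not_mem (hl i List.mem_cons_self) hk).symm,
      ih fun j hj => hl j (List.mem_cons_of_mem i hj)]

def IsDominant (J : Set ι) (x : V) : Prop := ∀ i ∈ J, 0 ≤ ⟪b i, x⟫

/-- The cone `∑_{k ∈ J} ℝ≥0 • b k`, described by coordinates. -/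
def posCone (J : Set ι) : PointedCone ℝ V where
  carrier := {z | ∀ k, 0 ≤ b.repr z k ∧ (k ∉ J → b.repr z k = 0)}
  add_mem' {x y} hx hy k := by
    simp only [map_add, Finsupp.add_apply]
    exact ⟨add_nonneg (hx k).1 (hy k).1, fun hk => by rw [(hx k).2 hk, (hy k).2 hk, add_zero]⟩
  zero_mem' := by simp
  smul_mem' c x hx k := by
    change 0 ≤ b.repr ((c : ℝ) • x) k ∧ (k ∉ J → b.repr ((c : ℝ) • x) k = 0)
    simp only [map_smul, Finsupp.smul_apply, smul_eq_mul]
    exact ⟨mul_nonneg c.2 (hx k).1, fun hk => by rw [(hx k).2 hk, mul_zero]⟩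

theorem mem_posCone {J : Set ι} {z : V} :
    z ∈ posCone b J ↔ ∀ k, 0 ≤ b.repr z k ∧ (k ∉ J → b.repr z k = 0) := Iff.rfl

theorem basis_mem_posCone {J : Set ι} {i : ι} (hi : i ∈ J) : b i ∈ posCone b J := by
  intro k
  rcases eq_or_ne k i with rfl | hk
  · simp [hi]
  · simp [Finsupp.single_eq_of_ne hk]

theorem inner_nonneg_of_mem_posCone [Fintype ι] {J : Set ι} {x z : V} (hx : IsDominant b J x)
    (hz : z ∈ posCone b J) : 0 ≤ ⟪z, x⟫ := by
  rw [← b.sum_repr z, sum_inner]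
  refine Finset.sum_nonneg fun k _ => ?_
  rw [real_inner_smul_left]
  by_cases hk : k ∈ J
  · exact mul_nonneg (hz k).1 (hx k hk)
  · rw [(hz k).2 hk, zero_mul]

def weylGroup (J : Set ι) : Subgroup (V ≃ₗ[ℝ] V) :=
  Subgroup.closure {g | ∃ i ∈ J, g = rootReflection (b i)}

theorem exists_reflWord_eq_of_mem_weylGroup {J : Set ι} {w : V ≃ₗ[ℝ] V}
    (hw : w ∈ weylGroup b J) : ∃ l : List ι, (∀ i ∈ l, i ∈ J) ∧ reflWord b l = w := by
  induction hw using Subgroup.closure_induction with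
  | mem g hg =>
    obtain ⟨i, hi, rfl⟩ := hg
    exact ⟨[i], by simpa using hi, by simp⟩
  | one => exact ⟨[], by simp, rfl⟩
  | mul g h _ _ ihg ihh =>
    obtain ⟨l₁, hl₁, rfl⟩ := ihg
    obtain ⟨l₂, hl₂, rfl⟩ := ihh
    exact ⟨l₁ ++ l₂, fun i hi => (List.mem_append.mp hi).elim (hl₁ i) (hl₂ i),
      reflWord_append b l₁ l₂⟩
  | inv g _ ih =>
    obtain ⟨l, hl, rfl⟩ := ih
    exact ⟨l.reverse, by simpa using hl, reflWord_reverse b l⟩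

theorem inner_inv_apply_of_mem_weylGroup {J : Set ι} {w : V ≃ₗ[ℝ] V} (hw : w ∈ weylGroup b J)
    (x y : V) : ⟪w⁻¹ x, y⟫ = ⟪x, w y⟫ := by
  obtain ⟨l, -, rfl⟩ := exists_reflWord_eq_of_mem_weylGroup b hw
  exact inner_reflWord_inv_apply b l x y

theorem finite_weylGroup {S : Set V} (hSfin : S.Finite) (hSspan : Submodule.span ℝ S = ⊤)
    (hS : ∀ i, MapsTo (rootReflection (b i)) S S) (J : Set ι) :
    (weylGroup b J : Set (V ≃ₗ[ℝ] V)).Finite := by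
  refine (finite_setOf_mapsTo hSfin hSspan).subset fun w hw => ?_
  obtain ⟨l, -, rfl⟩ := exists_reflWord_eq_of_mem_weylGroup b hw
  exact mapsTo_reflWord b hS l

theorem exists_mem_weylGroup_isDominant [Fintype ι] [FiniteDimensional ℝ V] {J : Set ι}
    (hfin : (weylGroup b J : Set (V ≃ₗ[ℝ] V)).Finite) (v : V) :
    ∃ w ∈ weylGroup b J, IsDominant b J (w v) := by
  set ρ : V :=
    (InnerProductSpace.toDual ℝ V).symm (LinearMap.toContinuousLinearMap (∑ i, b.coord i))
  have hρ (i : ι) : ⟪ρ, b i⟫ = 1 := by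
    rw [InnerProductSpace.toDual_symm_apply]
    simp
  -- a maximiser of `⟪ρ, w v⟫` over the finite group is dominant
  obtain ⟨w, hw, hmax⟩ := Set.exists_max_image _ (fun w : V ≃ₗ[ℝ] V => ⟪ρ, w v⟫) hfin
    ⟨1, (weylGroup b J).one_mem⟩
  refine ⟨w, hw, fun i hi => ?_⟩
  have h := hmax _ (mul_mem (Subgroup.subset_closure ⟨i, hi, rfl⟩) hw)
  rw [LinearEquiv.mul_apply, rootReflection_apply, inner_sub_right, real_inner_smul_right,
    hρ, mul_one, sub_le_self_iff, real_inner_comm] at h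
  have hbi : 0 < ⟪b i, b i⟫ := real_inner_self_pos.mpr (b.ne_zero i)
  have h2 := mul_nonneg h hbi.le
  rw [div_mul_cancel₀ _ hbi.ne'] at h2
  linarith

section PositiveRoots

variable {S P : Set V} (hPS : P ⊆ S) (hSP : ∀ β ∈ S, β ∈ P ∨ -β ∈ P)
  (hPpos : ∀ β ∈ P, ∀ k, 0 ≤ b.repr β k) (hS : ∀ i, MapsTo (rootReflection (b i)) S S)
include hPS hSP hPpos hS

theorem rootReflection_mem_of_repr_ne_zero {β : V} (hβ : β ∈ P) {i k : ι} (hk : k ≠ i)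
    (hβk : b.repr β k ≠ 0) : rootReflection (b i) β ∈ P := by
  refine (hSP _ (hS i (hPS hβ))).resolve_right fun hneg => ?_
  have h := hPpos _ hneg k
  rw [map_neg, Finsupp.neg_apply, repr_rootReflection_of_ne b hk] at h
  exact hβk (le_antisymm (neg_nonneg.mp h) (hPpos β hβ k))

theorem rootReflection_eq_of_rootReflection_notMem {β : V} (hβ : β ∈ P) {i : ι}
    (h : rootReflection (b i) β ∉ P) : rootReflection β = rootReflection (b i) := by
  have hβ_eq : β = b.repr β i • b i := by
    refine b.repr.injective ?_
    ext k
    rcases eq_or_ne k i with rfl | hk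
    · simp
    · rw [map_smul, b.repr_self, Finsupp.smul_apply, Finsupp.single_eq_of_ne hk, smul_zero]
      by_contra hβk
      exact h (rootReflection_mem_of_repr_ne_zero b hPS hSP hPpos hS hβ hk hβk)
  have hβi : b.repr β i ≠ 0 := by
    intro h0
    rw [h0, zero_smul] at hβ_eq
    exact h (by rw [hβ_eq, map_zero]; exact hβ_eq ▸ hβ)
  rw [hβ_eq, rootReflection_smul hβi]

theorem exists_sublist_rootReflection_mul_reflWord_eq (l : List ι) {β : V} (hβ : β ∈ P)
    (h : (reflWord b l)⁻¹ β ∉ P) :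
    ∃ l', l'.Sublist l ∧ rootReflection β * reflWord b l = reflWord b l' := by
  induction l generalizing β with
  | nil => exact absurd hβ h
  | cons j l ih =>
    rw [reflWord_cons, mul_inv_rev, rootReflection_inv, LinearEquiv.mul_apply] at h
    by_cases hjβ : rootReflection (b j) β ∈ P
    · obtain ⟨l', hl', hw⟩ := ih hjβ h
      refine ⟨j :: l', hl'.cons_cons j, ?_⟩
      rw [reflWord_cons, reflWord_cons, ← hw, rootReflection_rootReflection]
      simp only [← mul_assoc, rootReflection_mul_self, one_mul]
    · refine ⟨l, List.sublist_cons_self j l, ?_⟩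
      rw [reflWord_cons, rootReflection_eq_of_rootReflection_notMem b hPS hSP hPpos hS hβ hjβ,
        ← mul_assoc, rootReflection_mul_self, one_mul]

theorem sub_reflWord_mem_posCone [Fintype ι] (hbP : ∀ i, b i ∈ P) {J : Set ι} {X : V}
    (hX : IsDominant b J X) (l : List ι) (hl : ∀ i ∈ l, i ∈ J) :
    X - reflWord b l X ∈ posCone b J := by
  induction hn : l.length using Nat.strong_induction_on generalizing l with
  | _ n ih =>
  cases l with
  | nil => simp
  | cons i l =>
    have hi : i ∈ J := hl i List.mem_cons_self
    have hlJ : ∀ j ∈ l, j ∈ J := fun j hj => hl j (List.mem_cons_of_mem i hj)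
    by_cases hc : 0 ≤ ⟪reflWord b l X, b i⟫
    · have hsplit : X - reflWord b (i :: l) X =
          (X - reflWord b l X) + (2 * ⟪reflWord b l X, b i⟫ / ⟪b i, b i⟫) • b i := by
        rw [reflWord_cons, LinearEquiv.mul_apply, rootReflection_apply]
        abel
      rw [hsplit]
      exact add_mem (ih l.length (by simp [← hn]) l hlJ rfl)
        ((posCone b J).smul_mem (div_nonneg (mul_nonneg zero_le_two hc) real_inner_self_nonneg)
          (basis_mem_posCone b hi))
    · have hγ : (reflWord b l)⁻¹ (b i) ∉ P := by
        intro hγP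
        have hγcone : (reflWord b l)⁻¹ (b i) ∈ posCone b J := fun k => ⟨hPpos _ hγP k, fun hk => by
          rw [← reflWord_reverse, repr_reflWord_of_notMem b (by simpa using hlJ) hk, b.repr_self,
            Finsupp.single_eq_of_ne (ne_of_mem_of_not_mem hi hk).symm]⟩
        have := inner_nonneg_of_mem_posCone b hX hγcone
        rw [inner_reflWord_inv_apply, real_inner_comm] at this
        exact hc this
      obtain ⟨l', hl', hw⟩ :=
        exists_sublist_rootReflection_mul_reflWord_eq b hPS hSP hPpos hS l (hbP i) hγ
      rw [reflWord_cons, hw]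
      have hlen := hl'.length_le
      exact ih l'.length (by simp [← hn]; omega) l' (fun j hj => hlJ j (hl'.subset hj)) rfl

theorem sub_mem_posCone_iff_mem_convexHull_orbit [Fintype ι] (hSfin : S.Finite)
    (hbP : ∀ i, b i ∈ P) {J : Set ι} {X Y : V} (hX : IsDominant b J X) (hY : IsDominant b J Y) :
    X - Y ∈ posCone b J ↔ Y ∈ convexHull ℝ ((fun w : V ≃ₗ[ℝ] V => w X) '' weylGroup b J) := by
  have hcone {Z : V} (hZ : IsDominant b J Z) {w : V ≃ₗ[ℝ] V} (hw : w ∈ weylGroup b J) :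
      Z - w Z ∈ posCone b J := by
    obtain ⟨l, hl, rfl⟩ := exists_reflWord_eq_of_mem_weylGroup b hw
    exact sub_reflWord_mem_posCone b hPS hSP hPpos hS hbP hZ l hl
  constructor
  · intro hXY
    by_contra hYK
    have : FiniteDimensional ℝ V := b.finiteDimensional_of_finite
    have hSspan : Submodule.span ℝ S = ⊤ :=
      eq_top_iff.mpr (b.span_eq ▸ Submodule.span_mono (range_subset_iff.mpr fun i => hPS (hbP i)))
    have hfin := finite_weylGroup b hSfin hSspan hS J
    obtain ⟨v, hv⟩ := exists_inner_lt_of_notMem_convexHull (hfin.image _) hYK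
    obtain ⟨w, hw, hdom⟩ := exists_mem_weylGroup_isDominant b hfin v
    have hvY : ⟪v, Y⟫ ≤ ⟪w v, Y⟫ := by
      have h := inner_nonneg_of_mem_posCone b hY (hcone hdom (inv_mem hw))
      rw [← LinearEquiv.mul_apply, inv_mul_cancel, inner_sub_left] at h
      exact sub_nonneg.mp h
    have hYX : ⟪w v, Y⟫ ≤ ⟪w v, X⟫ := by
      have h := inner_nonneg_of_mem_posCone b hdom hXY
      rw [inner_sub_left] at h
      linarith [real_inner_comm X (w v), real_inner_comm Y (w v)]
    have hXv : ⟪w v, X⟫ = ⟪v, w⁻¹ X⟫ := by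
      rw [real_inner_comm, ← inner_inv_apply_of_mem_weylGroup b hw, real_inner_comm]
    have := hv _ ⟨w⁻¹, inv_mem hw, rfl⟩
    linarith
  · have hconv : Convex ℝ {Z | X - Z ∈ posCone b J} := by
      have h : {Z | X - Z ∈ posCone b J} = (fun Z => -X + Z) ⁻¹' (-(posCone b J : Set V)) := by
        ext Z
        simp [neg_add_eq_sub]
      rw [h]
      exact (posCone b J).convex.neg.translate_preimage_right (-X)
    exact fun hYK => convexHull_min (by rintro _ ⟨w, hw, rfl⟩; exact hcone hX hw) hconv hYK

end PositiveRoots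

theorem mem_posCone_iff_inner [Fintype ι] {ϖ : ι → V} (hϖ0 : ∀ i j, i ≠ j → ⟪ϖ i, b j⟫ = 0)
    (hϖpos : ∀ i, 0 < ⟪ϖ i, b i⟫) {J : Set ι} {z : V} :
    z ∈ posCone b J ↔ (∀ i ∈ J, 0 ≤ ⟪ϖ i, z⟫) ∧ ∀ i ∉ J, ⟪ϖ i, z⟫ = 0 := by
  have hcoord (i : ι) : ⟪ϖ i, z⟫ = b.repr z i * ⟪ϖ i, b i⟫ := by
    conv_lhs => rw [← b.sum_repr z]
    rw [inner_sum, Finset.sum_eq_single i (fun j _ hj => by rw [real_inner_smul_right,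
      hϖ0 i j hj.symm, mul_zero]) (by simp), real_inner_smul_right]
  simp only [mem_posCone, hcoord, mul_nonneg_iff_of_pos_right (hϖpos _), mul_eq_zero,
    (hϖpos _).ne', or_false]
  refine ⟨fun h => ⟨fun i _ => (h i).1, fun i => (h i).2⟩, fun ⟨h₁, h₂⟩ k => ?_⟩
  by_cases hk : k ∈ J
  · exact ⟨h₁ k hk, fun h => absurd hk h⟩
  · exact ⟨(h₂ k hk).ge, h₂ k⟩

theorem inner_basis_of_two_inner_div_eq_ite [DecidableEq ι] {ϖ b' : ι → V}
    (hb' : ∀ j, ∃ t : ℝ, 0 < t ∧ b' j = t • b j)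
    (hϖ : ∀ i j, 2 * ⟪ϖ i, b' j⟫ / ⟪b' j, b' j⟫ = if i = j then (1 : ℝ) else 0) :
    (∀ i j, i ≠ j → ⟪ϖ i, b j⟫ = 0) ∧ ∀ i, 0 < ⟪ϖ i, b i⟫ := by
  have hsign (i j : ι) :
      SignType.sign ⟪ϖ i, b j⟫ = SignType.sign (if i = j then (1 : ℝ) else 0) := by
    obtain ⟨t, ht, hj⟩ := hb' j
    rw [← hϖ i j, hj, sign_two_inner_smul_div ht (b.ne_zero j)]
  refine ⟨fun i j hij => sign_eq_zero_iff.mp ?_, fun i => sign_eq_one_iff.mp ?_⟩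
  · rw [hsign, if_neg hij, sign_zero]
  · rw [hsign, if_pos rfl, sign_one]

end ParabolicOrbit

open ParabolicOrbit

theorem mem_convexHull_orbit_iff_weight_inequalities_general
    {V : Type*} [NormedAddCommGroup V] [InnerProductSpace ℝ V]
    -- the root system Σ
    (S : Finset V)
    -- the reflections s_α
    (sα : V → (V ≃ₗ[ℝ] V))
    (hsα : ∀ α ∈ S, ∀ x : V, sα α x = x - (2 * ⟪x, α⟫ / ⟪α, α⟫) • α)
    (hSrefl : ∀ α ∈ S, ∀ β ∈ S, sα α β ∈ S)
    -- the system of positive roots Σ⁺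
    (P : Finset V) (hPS : P ⊆ S)
    (hPpart : ∀ β ∈ S, (β ∈ P ∨ -β ∈ P) ∧ ¬(β ∈ P ∧ -β ∈ P))
    -- the simple roots Π = {α 1, …, α r}, a basis of `V`
    (r : ℕ) (α : Fin r → V)
    (hαP : ∀ i, α i ∈ P)
    (hαindep : LinearIndependent ℝ α)
    (hαspan : Submodule.span ℝ (Set.range α) = ⊤)
    (hαsimple : ∀ β ∈ P, ∃ c : Fin r → ℝ, (∀ i, 0 ≤ c i) ∧ β = ∑ i, c i • α i)
    -- the roots α'ᵢ (:= 2αᵢ if `2αᵢ` is a root, αᵢ otherwise)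
    (α' : Fin r → V)
    (hα' : ∀ i, ((2 : ℝ) • α i ∈ S → α' i = (2 : ℝ) • α i) ∧
      ((2 : ℝ) • α i ∉ S → α' i = α i))
    -- the fundamental weights ϖᵢ
    (ϖ : Fin r → V)
    (hϖ : ∀ i j, 2 * ⟪ϖ i, α' j⟫ / ⟪α' j, α' j⟫ = if i = j then (1 : ℝ) else 0)
    -- the subset Π' ⊆ Π
    (P' : Finset (Fin r))
    -- `X ∈ a⁺_{Π'}` and `Y ∈ a`
    (X : V) (hX : ∀ i ∈ P', 0 ≤ ⟪α i, X⟫)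
    (Y : V) :
    ((∀ i ∈ P', 0 ≤ ⟪α i, Y⟫) ∧
      (∀ i ∈ P', ⟪ϖ i, Y⟫ ≤ ⟪ϖ i, X⟫) ∧
      (∀ i, i ∉ P' → ⟪ϖ i, Y⟫ = ⟪ϖ i, X⟫)) ↔
    ((∀ i ∈ P', 0 ≤ ⟪α i, Y⟫) ∧
      Y ∈ convexHull ℝ ((fun w : V ≃ₗ[ℝ] V => w X) ''
        (Subgroup.closure {g : V ≃ₗ[ℝ] V | ∃ i ∈ P', g = sα (α i)} :
          Set (V ≃ₗ[ℝ] V)))) := by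
  obtain ⟨b, rfl⟩ : ∃ b : Module.Basis (Fin r) ℝ V, ⇑b = α :=
    ⟨.mk hαindep hαspan.ge, Module.Basis.coe_mk _ _⟩
  have hsα' (i : Fin r) : sα (b i) = rootReflection (b i) :=
    LinearEquiv.ext fun x => by rw [hsα _ (hPS (hαP i)), rootReflection_apply]
  have hPpos : ∀ β ∈ (P : Set V), ∀ k, 0 ≤ b.repr β k := by
    intro β hβ k
    obtain ⟨c, hc, rfl⟩ := hαsimple β hβ
    rw [b.repr_sum_self]
    exact hc k
  have hb' (j : Fin r) : ∃ t : ℝ, 0 < t ∧ α' j = t • b j := by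
    by_cases h : (2 : ℝ) • b j ∈ S
    · exact ⟨2, two_pos, (hα' j).1 h⟩
    · exact ⟨1, one_pos, by rw [(hα' j).2 h, one_smul]⟩
  obtain ⟨hϖ0, hϖpos⟩ := inner_basis_of_two_inner_div_eq_ite b hb' hϖ
  have hcore := sub_mem_posCone_iff_mem_convexHull_orbit b hPS (fun β hβ => (hPpart β hβ).1)
    hPpos (fun i β hβ => hsα' i ▸ hSrefl _ (hPS (hαP i)) β hβ) S.finite_toSet hαP
    (J := P') hX (Y := Y)
  simp only [hsα']
  refine and_congr_right fun hY => Iff.trans ?_ (hcore hY)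
  rw [mem_posCone_iff_inner b hϖ0 hϖpos]
  simp [inner_sub_right, sub_nonneg, sub_eq_zero, eq_comm]

theorem mem_convexHull_orbit_iff_weight_inequalities
    {V : Type*} [NormedAddCommGroup V] [InnerProductSpace ℝ V] [FiniteDimensional ℝ V]
    -- the root system Σ
    (S : Finset V) (hS0 : (0 : V) ∉ S)
    (hSspan : Submodule.span ℝ (S : Set V) = ⊤)
    -- the reflections s_α
    (sα : V → (V ≃ₗ[ℝ] V))
    (hsα : ∀ α ∈ S, ∀ x : V, sα α x = x - (2 * ⟪x, α⟫ / ⟪α, α⟫) • α)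
    (hSrefl : ∀ α ∈ S, ∀ β ∈ S, sα α β ∈ S)
    (hcrys : ∀ α ∈ S, ∀ β ∈ S, ∃ n : ℤ, 2 * ⟪β, α⟫ / ⟪α, α⟫ = (n : ℝ))
    -- the system of positive roots Σ⁺
    (P : Finset V) (hPS : P ⊆ S)
    (hPhalf : ∃ f : V →ₗ[ℝ] ℝ, ∀ β ∈ P, 0 < f β)
    (hPpart : ∀ β ∈ S, (β ∈ P ∨ -β ∈ P) ∧ ¬(β ∈ P ∧ -β ∈ P))
    -- the simple roots Π = {α 1, …, α r}, a basis of `V`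
    (r : ℕ) (α : Fin r → V)
    (hαP : ∀ i, α i ∈ P)
    (hαindep : LinearIndependent ℝ α)
    (hαspan : Submodule.span ℝ (Set.range α) = ⊤)
    (hαsimple : ∀ β ∈ P, ∃ c : Fin r → ℝ, (∀ i, 0 ≤ c i) ∧ β = ∑ i, c i • α i)
    -- the roots α'ᵢ (:= 2αᵢ if `2αᵢ` is a root, αᵢ otherwise)
    (α' : Fin r → V)
    (hα' : ∀ i, ((2 : ℝ) • α i ∈ S → α' i = (2 : ℝ) • α i) ∧
      ((2 : ℝ) • α i ∉ S → α' i = α i))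
    -- the fundamental weights ϖᵢ
    (ϖ : Fin r → V)
    (hϖ : ∀ i j, 2 * ⟪ϖ i, α' j⟫ / ⟪α' j, α' j⟫ = if i = j then (1 : ℝ) else 0)
    -- the subset Π' ⊆ Π
    (P' : Finset (Fin r))
    -- `X ∈ a⁺_{Π'}` and `Y ∈ a`
    (X : V) (hX : ∀ i ∈ P', 0 ≤ ⟪α i, X⟫)
    (Y : V) :
    ((∀ i ∈ P', 0 ≤ ⟪α i, Y⟫) ∧
      (∀ i ∈ P', ⟪ϖ i, Y⟫ ≤ ⟪ϖ i, X⟫) ∧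
      (∀ i, i ∉ P' → ⟪ϖ i, Y⟫ = ⟪ϖ i, X⟫)) ↔
    ((∀ i ∈ P', 0 ≤ ⟪α i, Y⟫) ∧
      Y ∈ convexHull ℝ ((fun w : V ≃ₗ[ℝ] V => w X) ''
        (Subgroup.closure {g : V ≃ₗ[ℝ] V | ∃ i ∈ P', g = sα (α i)} :
          Set (V ≃ₗ[ℝ] V)))) :=
  mem_convexHull_orbit_iff_weight_inequalities_general S sα hsα hSrefl P hPS hPpart r α hαP hαindep
    hαspan hαsimple α' hα' ϖ hϖ P' X hX Y

end
end

section
/- For every generic X ∈ a⁺ there exists a generic X' ∈ a⁺ that has the same type as X and is extreme. If moreover X is symmetric, then X' can be chosen symmetric as well. -/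
/-!
Let `T` be the set of `W`-translates of `X` of the same type as `X` (finite, since `W` acts
faithfully on the finite spanning set `Σ`) and let `X'` be the sum of `T`. Every weight has a
constant sign on `T`, hence the same sign on `X'`. An element of `W` (or `-w₀`, when `X` is
symmetric) that preserves the type of `X` permutes `T`, hence fixes `X'`; this gives extremality
and symmetry. If `X'` were strictly on the negative side of the wall of a simple root `αᵢ`, the
point where the segment `[X, X']` crosses that wall would have the type of `X` and be fixed by
`s_{αᵢ}`, so `s_{αᵢ}` would preserve the type of `X` and fix `X'`, forcing `⟪αᵢ, X'⟫ = 0`.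
-/

open scoped RealInnerProductSpace

noncomputable section

/-- `Y` has the same type as `X` (relative to the finite set `Ω` of weights, identified
with linear forms via the inner product): every element of `Ω` takes the same sign on
`X` and on `Y`. -/
def SameTypeW {V : Type*} [NormedAddCommGroup V] [InnerProductSpace ℝ V]
    (Ω : Finset V) (X Y : V) : Prop :=
  (∀ l ∈ Ω, (0 < ⟪l, X⟫ ↔ 0 < ⟪l, Y⟫)) ∧ (∀ l ∈ Ω, (⟪l, X⟫ < 0 ↔ ⟪l, Y⟫ < 0))

open Set Function SignType

theorem sign_eq_sign_iff {α : Type*} [Zero α] [LinearOrder α] {a b : α} :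
    sign a = sign b ↔ ((0 < a ↔ 0 < b) ∧ (a < 0 ↔ b < 0)) := by
  rcases lt_trichotomy a 0 with ha | rfl | ha <;> rcases lt_trichotomy b 0 with hb | rfl | hb <;>
    simp [sign_neg, sign_pos, *, not_lt_of_gt]

theorem map_sum_eq_of_mapsTo {M F : Type*} [AddCommMonoid M] [FunLike F M M]
    [AddMonoidHomClass F M M] (f : F) {T : Finset M} (hinj : InjOn f T) (hmaps : MapsTo f T T) :
    f (∑ z ∈ T, z) = ∑ z ∈ T, z := by
  have hbij := (T.finite_toSet.injOn_iff_bijOn_of_mapsTo hmaps).mp hinj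
  rw [map_sum]
  exact Finset.sum_nbij f hmaps hinj hbij.surjOn fun _ _ => rfl

theorem finite_of_forall_mapsTo_of_span_eq_top {R M : Type*} [Semiring R] [AddCommMonoid M]
    [Module R M] {Φ : Set M} (hΦ : Φ.Finite) (hspan : Submodule.span R Φ = ⊤)
    {G : Subgroup (M ≃ₗ[R] M)} (hG : ∀ g ∈ G, MapsTo g Φ Φ) : Finite G := by
  have : Finite Φ := hΦ.to_subtype
  refine Finite.of_injective (fun g : G => (hG g g.2).restrict) fun g h hgh => ?_
  refine Subtype.ext <| LinearEquiv.toLinearMap_injective <| LinearMap.ext_on hspan fun x hx => ?_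
  exact congrArg Subtype.val (congrFun hgh ⟨x, hx⟩)

section SameType

variable {V : Type*} [NormedAddCommGroup V] [InnerProductSpace ℝ V] {Ω : Finset V} {X Y Z : V}

theorem sameTypeW_iff_sign :
    SameTypeW Ω X Y ↔ ∀ l ∈ Ω, sign ⟪l, X⟫ = sign ⟪l, Y⟫ := by
  simp only [sign_eq_sign_iff, SameTypeW, forall₂_and]

namespace SameTypeW

@[refl]
theorem refl (Ω : Finset V) (X : V) : SameTypeW Ω X X :=
  sameTypeW_iff_sign.2 fun _ _ => rfl

@[symm]
theorem symm (h : SameTypeW Ω X Y) : SameTypeW Ω Y X :=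
  sameTypeW_iff_sign.2 fun l hl => (sameTypeW_iff_sign.1 h l hl).symm

@[trans]
theorem trans (h : SameTypeW Ω X Y) (h' : SameTypeW Ω Y Z) : SameTypeW Ω X Z :=
  sameTypeW_iff_sign.2 fun l hl =>
    (sameTypeW_iff_sign.1 h l hl).trans (sameTypeW_iff_sign.1 h' l hl)

theorem neg (h : SameTypeW Ω X Y) : SameTypeW Ω (-X) (-Y) :=
  sameTypeW_iff_sign.2 fun l hl => by
    simp only [inner_neg_right, Left.sign_neg, sameTypeW_iff_sign.1 h l hl]

theorem inner_ne_zero (h : SameTypeW Ω X Y) {l : V} (hl : l ∈ Ω) (hX : ⟪l, X⟫ ≠ 0) :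
    ⟪l, Y⟫ ≠ 0 := by
  rwa [← sign_ne_zero, ← sameTypeW_iff_sign.1 h l hl, sign_ne_zero]

theorem map {g g' : V → V} (hadj : ∀ l x, ⟪l, g x⟫ = ⟪g' l, x⟫) (hΩ : ∀ l ∈ Ω, g' l ∈ Ω)
    (h : SameTypeW Ω X Y) : SameTypeW Ω (g X) (g Y) :=
  sameTypeW_iff_sign.2 fun l hl => by rw [hadj, hadj, sameTypeW_iff_sign.1 h _ (hΩ l hl)]

theorem smul_add_smul {a b : ℝ} (ha : 0 < a) (hb : 0 ≤ b) (h : SameTypeW Ω X Z) :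
    SameTypeW Ω X (a • X + b • Z) := by
  refine sameTypeW_iff_sign.2 fun l hl => ?_
  have hXZ := sameTypeW_iff_sign.1 h l hl
  rw [inner_add_right, real_inner_smul_right, real_inner_smul_right]
  rcases lt_trichotomy ⟪l, X⟫ 0 with hX | hX | hX
  · rw [sign_neg hX] at hXZ ⊢
    rw [sign_neg (by nlinarith [sign_eq_neg_one_iff.1 hXZ.symm])]
  · rw [hX, sign_zero] at hXZ ⊢
    rw [sign_eq_zero_iff.1 hXZ.symm]; simp
  · rw [sign_pos hX] at hXZ ⊢
    rw [sign_pos (by nlinarith [sign_eq_one_iff.1 hXZ.symm])]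

theorem sum {T : Finset V} (hT : T.Nonempty) (h : ∀ Z ∈ T, SameTypeW Ω X Z) :
    SameTypeW Ω X (∑ Z ∈ T, Z) :=
  sameTypeW_iff_sign.2 fun l hl => by
    rw [inner_sum]
    exact (sign_sum hT _ fun Z hZ => (sameTypeW_iff_sign.1 (h Z hZ) l hl).symm).symm

end SameTypeW

end SameType

section Reflection

variable {V : Type*} [NormedAddCommGroup V] [InnerProductSpace ℝ V]

theorem Submodule.reflection_orthogonalComplement_singleton_apply (β x : V) :
    (ℝ ∙ β)ᗮ.reflection x = x - (2 * ⟪x, β⟫ / ⟪β, β⟫) • β := by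
  rw [reflection_orthogonal_apply, reflection_singleton_apply, neg_sub, two_nsmul, ← add_smul,
    real_inner_self_eq_norm_sq, real_inner_comm, mul_div_assoc, two_mul]
  rfl

theorem Submodule.inner_reflection_right (K : Submodule ℝ V) [K.HasOrthogonalProjection]
    (x y : V) : ⟪x, K.reflection y⟫ = ⟪K.reflection x, y⟫ := by
  conv_lhs => rw [← K.reflection_reflection x]
  exact K.reflection.inner_map_map _ _

theorem inner_reflection_orthogonalComplement_singleton (β x : V) :
    ⟪β, (ℝ ∙ β)ᗮ.reflection x⟫ = -⟪β, x⟫ := by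
  rw [Submodule.inner_reflection_right, Submodule.reflection_orthogonalComplement_singleton_eq_neg,
    inner_neg_left]

end Reflection

section IsometryGroup

variable {V : Type*} [NormedAddCommGroup V] [InnerProductSpace ℝ V]
  {G : Subgroup (V ≃ₗ[ℝ] V)} {Ω : Finset V} {X : V}

theorem inner_apply_eq_inner_inv_apply {g : V ≃ₗ[ℝ] V} (hg : ∀ x y, ⟪g x, g y⟫ = ⟪x, y⟫)
    (l x : V) : ⟪l, g x⟫ = ⟪g⁻¹ l, x⟫ := by
  conv_lhs => rw [← g.apply_symm_apply l]
  exact hg _ _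

theorem SameTypeW.map_of_mem (hGiso : ∀ g ∈ G, ∀ x y, ⟪g x, g y⟫ = ⟪x, y⟫)
    (hGΩ : ∀ g ∈ G, ∀ l ∈ Ω, g l ∈ Ω) {g : V ≃ₗ[ℝ] V} (hg : g ∈ G) {Y Z : V}
    (h : SameTypeW Ω Y Z) : SameTypeW Ω (g Y) (g Z) :=
  h.map (inner_apply_eq_inner_inv_apply (hGiso g hg)) (hGΩ _ (inv_mem hg))

variable (G Ω X) in
def sameTypeTranslates : Set V :=
  {Z | (∃ g ∈ G, g X = Z) ∧ SameTypeW Ω X Z}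

theorem self_mem_sameTypeTranslates : X ∈ sameTypeTranslates G Ω X :=
  ⟨⟨1, one_mem G, rfl⟩, .refl Ω X⟩

theorem finite_sameTypeTranslates [Finite G] : (sameTypeTranslates G Ω X).Finite :=
  (finite_range fun g : G => g.1 X).subset fun _ ⟨⟨g, hg, hgX⟩, _⟩ => ⟨⟨g, hg⟩, hgX⟩

theorem mapsTo_sameTypeTranslates (hGiso : ∀ g ∈ G, ∀ x y, ⟪g x, g y⟫ = ⟪x, y⟫)
    (hGΩ : ∀ g ∈ G, ∀ l ∈ Ω, g l ∈ Ω) {g : V ≃ₗ[ℝ] V} (hg : g ∈ G) (hgX : SameTypeW Ω X (g X)) :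
    MapsTo g (sameTypeTranslates G Ω X) (sameTypeTranslates G Ω X) := by
  rintro _ ⟨⟨u, hu, rfl⟩, hZ⟩
  exact ⟨⟨g * u, mul_mem hg hu, rfl⟩, hgX.trans (hZ.map_of_mem hGiso hGΩ hg)⟩

theorem mapsTo_neg_sameTypeTranslates (hGiso : ∀ g ∈ G, ∀ x y, ⟪g x, g y⟫ = ⟪x, y⟫)
    (hGΩ : ∀ g ∈ G, ∀ l ∈ Ω, g l ∈ Ω) {w : V ≃ₗ[ℝ] V} (hw : w ∈ G) (hwX : w X = -X) :
    MapsTo (fun Z => -w Z) (sameTypeTranslates G Ω X) (sameTypeTranslates G Ω X) := by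
  have hw' : w.symm X = -X := by rw [LinearEquiv.symm_apply_eq, map_neg, hwX, neg_neg]
  rintro _ ⟨⟨u, hu, rfl⟩, hZ⟩
  refine ⟨⟨w * u * w⁻¹, mul_mem (mul_mem hw hu) (inv_mem hw), ?_⟩, ?_⟩
  · simp [hw']
  · simpa [hwX] using (hZ.map_of_mem hGiso hGΩ hw).neg

variable (G Ω X) in
/-- `card` times the barycentre of `sameTypeTranslates G Ω X` (junk value `0` if that set is
infinite, which cannot happen for finite `G`). -/
def sameTypeBarycenter : V :=
  ∑ᶠ Z ∈ sameTypeTranslates G Ω X, Z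

theorem sameTypeW_sameTypeBarycenter [Finite G] : SameTypeW Ω X (sameTypeBarycenter G Ω X) := by
  rw [sameTypeBarycenter, finsum_mem_eq_finite_toFinset_sum _ finite_sameTypeTranslates]
  exact .sum ⟨X, by simpa using self_mem_sameTypeTranslates⟩ fun Z hZ =>
    ((finite_sameTypeTranslates.mem_toFinset).1 hZ).2

theorem map_sameTypeBarycenter [Finite G] {φ : V →ₗ[ℝ] V} (hφ : Injective φ)
    (hmaps : MapsTo φ (sameTypeTranslates G Ω X) (sameTypeTranslates G Ω X)) :
    φ (sameTypeBarycenter G Ω X) = sameTypeBarycenter G Ω X := by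
  rw [sameTypeBarycenter, finsum_mem_eq_finite_toFinset_sum _ finite_sameTypeTranslates]
  exact map_sum_eq_of_mapsTo φ hφ.injOn (by simpa using hmaps)

theorem apply_sameTypeBarycenter_eq_of_sameTypeW [Finite G]
    (hGiso : ∀ g ∈ G, ∀ x y, ⟪g x, g y⟫ = ⟪x, y⟫) (hGΩ : ∀ g ∈ G, ∀ l ∈ Ω, g l ∈ Ω)
    {g : V ≃ₗ[ℝ] V} (hg : g ∈ G)
    (h : SameTypeW Ω (sameTypeBarycenter G Ω X) (g (sameTypeBarycenter G Ω X))) :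
    g (sameTypeBarycenter G Ω X) = sameTypeBarycenter G Ω X := by
  have hX' : SameTypeW Ω X (sameTypeBarycenter G Ω X) := sameTypeW_sameTypeBarycenter
  have hgX : SameTypeW Ω X (g X) := (hX'.trans h).trans (hX'.map_of_mem hGiso hGΩ hg).symm
  exact map_sameTypeBarycenter (φ := g.toLinearMap) g.injective
    (mapsTo_sameTypeTranslates hGiso hGΩ hg hgX)

theorem neg_apply_sameTypeBarycenter [Finite G]
    (hGiso : ∀ g ∈ G, ∀ x y, ⟪g x, g y⟫ = ⟪x, y⟫) (hGΩ : ∀ g ∈ G, ∀ l ∈ Ω, g l ∈ Ω)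
    {w : V ≃ₗ[ℝ] V} (hw : w ∈ G) (hwX : w X = -X) :
    -w (sameTypeBarycenter G Ω X) = sameTypeBarycenter G Ω X :=
  map_sameTypeBarycenter (φ := -w.toLinearMap) (neg_injective.comp w.injective)
    (mapsTo_neg_sameTypeTranslates hGiso hGΩ hw hwX)

theorem inner_sameTypeBarycenter_nonneg [Finite G]
    (hGiso : ∀ g ∈ G, ∀ x y, ⟪g x, g y⟫ = ⟪x, y⟫) (hGΩ : ∀ g ∈ G, ∀ l ∈ Ω, g l ∈ Ω)
    {β : V} {s : V ≃ₗ[ℝ] V} (hs : s ∈ G) (hsβ : ∀ x, s x = (ℝ ∙ β)ᗮ.reflection x)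
    (hX : 0 ≤ ⟪β, X⟫) : 0 ≤ ⟪β, sameTypeBarycenter G Ω X⟫ := by
  set X' := sameTypeBarycenter G Ω X
  by_contra! hX'
  have hXX' : SameTypeW Ω X X' := sameTypeW_sameTypeBarycenter
  -- the segment from `X` to `X'` meets the wall of `β` at a point `Y` of the same type
  set Y := (-⟪β, X'⟫) • X + ⟪β, X⟫ • X'
  have hXY : SameTypeW Ω X Y := hXX'.smul_add_smul (by linarith) hX
  have hsY : s Y = Y := by
    rw [hsβ]
    refine Submodule.reflection_mem_subspace_eq_self ?_
    rw [Submodule.mem_orthogonal_singleton_iff_inner_right, inner_add_right,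
      real_inner_smul_right, real_inner_smul_right]
    ring
  have hsX : SameTypeW Ω X (s X) :=
    hXY.trans (hsY ▸ (hXY.map_of_mem hGiso hGΩ hs).symm)
  have hsX' : s X' = X' :=
    map_sameTypeBarycenter (φ := s.toLinearMap) s.injective
      (mapsTo_sameTypeTranslates hGiso hGΩ hs hsX)
  have := inner_reflection_orthogonalComplement_singleton β X'
  rw [← hsβ, hsX'] at this
  linarith

end IsometryGroup

section WeylGroup

variable {V : Type*} [NormedAddCommGroup V] [InnerProductSpace ℝ V]
  {S : Set V} {sα : V → V ≃ₗ[ℝ] V}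

theorem inv_eq_self_of_eq_reflection {β : V} (hβ : ∀ x, sα β x = (ℝ ∙ β)ᗮ.reflection x) :
    (sα β)⁻¹ = sα β :=
  inv_eq_of_mul_eq_one_right <| LinearEquiv.ext fun x => by
    simp [LinearEquiv.mul_apply, hβ]

theorem inner_map_map_of_mem_closure (hsα : ∀ β ∈ S, ∀ x, sα β x = (ℝ ∙ β)ᗮ.reflection x)
    {w : V ≃ₗ[ℝ] V} (hw : w ∈ Subgroup.closure (sα '' S)) (x y : V) : ⟪w x, w y⟫ = ⟪x, y⟫ := by
  induction hw using Subgroup.closure_induction'' generalizing x y with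
  | mem _ h =>
    obtain ⟨β, hβ, rfl⟩ := h
    simp only [hsα β hβ, LinearIsometryEquiv.inner_map_map]
  | inv_mem _ h =>
    obtain ⟨β, hβ, rfl⟩ := h
    simp only [inv_eq_self_of_eq_reflection (hsα β hβ), hsα β hβ, LinearIsometryEquiv.inner_map_map]
  | one => rfl
  | mul u v _ _ hu hv => exact (hu _ _).trans (hv x y)

theorem mapsTo_of_mem_closure (hsα : ∀ β ∈ S, ∀ x, sα β x = (ℝ ∙ β)ᗮ.reflection x)
    (hS : ∀ α ∈ S, ∀ β ∈ S, sα α β ∈ S) {w : V ≃ₗ[ℝ] V} (hw : w ∈ Subgroup.closure (sα '' S)) :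
    MapsTo w S S := by
  induction hw using Subgroup.closure_induction'' with
  | mem _ h =>
    obtain ⟨α, hα, rfl⟩ := h
    exact hS α hα
  | inv_mem _ h =>
    obtain ⟨α, hα, rfl⟩ := h
    rw [inv_eq_self_of_eq_reflection (hsα α hα)]
    exact hS α hα
  | one => exact mapsTo_id S
  | mul u v _ _ hu hv => exact hu.comp hv

end WeylGroup

theorem exists_extreme_symmetric_generic_of_same_type_general
    {V : Type*} [NormedAddCommGroup V] [InnerProductSpace ℝ V]
    -- the root system Σ
    (S : Finset V)
    (hSspan : Submodule.span ℝ (S : Set V) = ⊤)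
    -- the reflections s_α
    (sα : V → (V ≃ₗ[ℝ] V))
    (hsα : ∀ α ∈ S, ∀ x : V, sα α x = x - (2 * ⟪x, α⟫ / ⟪α, α⟫) • α)
    (hSrefl : ∀ α ∈ S, ∀ β ∈ S, sα α β ∈ S)
    -- the system of positive roots Σ⁺
    (P : Finset V) (hPS : P ⊆ S)
    -- the simple roots Π = {α 1, …, α r}, a basis of `V`
    (r : ℕ) (α : Fin r → V)
    (hαP : ∀ i, α i ∈ P)
    -- the longest element `w₀` of the Weyl group `W = ⟨s_α : α ∈ Σ⟩`
    (w₀ : V ≃ₗ[ℝ] V)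
    (hw₀W : w₀ ∈ Subgroup.closure (sα '' (S : Set V)))
    -- the finite `W`-stable set `Ω` of restricted weights
    (Ω : Finset V)
    (hΩW : ∀ w ∈ Subgroup.closure (sα '' (S : Set V)), ∀ l ∈ Ω, w l ∈ Ω)
    -- a generic `X` in the closed dominant Weyl chamber
    (X : V)
    (hXdom : ∀ i, 0 ≤ ⟪α i, X⟫)
    (hXgen : ∀ l ∈ Ω, l ≠ 0 → ⟪l, X⟫ ≠ 0) :
    ∃ X' : V,
      (∀ i, 0 ≤ ⟪α i, X'⟫) ∧
      (∀ l ∈ Ω, l ≠ 0 → ⟪l, X'⟫ ≠ 0) ∧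
      SameTypeW Ω X X' ∧
      (∀ w ∈ Subgroup.closure (sα '' (S : Set V)),
        SameTypeW Ω X' (w X') → w X' = X') ∧
      (-(w₀ X) = X → -(w₀ X') = X') := by
  set W := Subgroup.closure (sα '' (S : Set V))
  have hrefl : ∀ β ∈ (S : Set V), ∀ x, sα β x = (ℝ ∙ β)ᗮ.reflection x := fun β hβ x => by
    rw [hsα β hβ, Submodule.reflection_orthogonalComplement_singleton_apply]
  have hWiso : ∀ w ∈ W, ∀ x y, ⟪w x, w y⟫ = ⟪x, y⟫ := fun _ => inner_map_map_of_mem_closure hrefl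
  have : Finite W := finite_of_forall_mapsTo_of_span_eq_top S.finite_toSet hSspan
    fun _ => mapsTo_of_mem_closure hrefl hSrefl
  have hXX' : SameTypeW Ω X (sameTypeBarycenter W Ω X) := sameTypeW_sameTypeBarycenter
  refine ⟨sameTypeBarycenter W Ω X, fun i => ?_, fun l hl hl0 => hXX'.inner_ne_zero hl
    (hXgen l hl hl0), hXX', fun w hw => apply_sameTypeBarycenter_eq_of_sameTypeW hWiso hΩW hw,
    fun hsym => neg_apply_sameTypeBarycenter hWiso hΩW hw₀W (neg_eq_iff_eq_neg.mp hsym)⟩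
  have hαS : α i ∈ (S : Set V) := hPS (hαP i)
  exact inner_sameTypeBarycenter_nonneg hWiso hΩW (Subgroup.subset_closure ⟨α i, hαS, rfl⟩)
    (hrefl _ hαS) (hXdom i)

theorem exists_extreme_symmetric_generic_of_same_type
    {V : Type*} [NormedAddCommGroup V] [InnerProductSpace ℝ V] [FiniteDimensional ℝ V]
    -- the root system Σ
    (S : Finset V) (hS0 : (0 : V) ∉ S)
    (hSspan : Submodule.span ℝ (S : Set V) = ⊤)
    -- the reflections s_α
    (sα : V → (V ≃ₗ[ℝ] V))
    (hsα : ∀ α ∈ S, ∀ x : V, sα α x = x - (2 * ⟪x, α⟫ / ⟪α, α⟫) • α)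
    (hSrefl : ∀ α ∈ S, ∀ β ∈ S, sα α β ∈ S)
    (hcrys : ∀ α ∈ S, ∀ β ∈ S, ∃ n : ℤ, 2 * ⟪β, α⟫ / ⟪α, α⟫ = (n : ℝ))
    -- the system of positive roots Σ⁺
    (P : Finset V) (hPS : P ⊆ S)
    (hPhalf : ∃ f : V →ₗ[ℝ] ℝ, ∀ β ∈ P, 0 < f β)
    (hPpart : ∀ β ∈ S, (β ∈ P ∨ -β ∈ P) ∧ ¬(β ∈ P ∧ -β ∈ P))
    -- the simple roots Π = {α 1, …, α r}, a basis of `V`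
    (r : ℕ) (α : Fin r → V)
    (hαP : ∀ i, α i ∈ P)
    (hαindep : LinearIndependent ℝ α)
    (hαspan : Submodule.span ℝ (Set.range α) = ⊤)
    (hαsimple : ∀ β ∈ P, ∃ c : Fin r → ℝ, (∀ i, 0 ≤ c i) ∧ β = ∑ i, c i • α i)
    -- the longest element `w₀` of the Weyl group `W = ⟨s_α : α ∈ Σ⟩`
    (w₀ : V ≃ₗ[ℝ] V)
    (hw₀W : w₀ ∈ Subgroup.closure (sα '' (S : Set V)))
    (hw₀ : (⇑w₀) '' (P : Set V) = (fun x : V => -x) '' (P : Set V))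
    -- the finite `W`-stable set `Ω` of restricted weights
    (Ω : Finset V)
    (hΩW : ∀ w ∈ Subgroup.closure (sα '' (S : Set V)), ∀ l ∈ Ω, w l ∈ Ω)
    -- a generic `X` in the closed dominant Weyl chamber
    (X : V)
    (hXdom : ∀ i, 0 ≤ ⟪α i, X⟫)
    (hXgen : ∀ l ∈ Ω, l ≠ 0 → ⟪l, X⟫ ≠ 0) :
    ∃ X' : V,
      (∀ i, 0 ≤ ⟪α i, X'⟫) ∧
      (∀ l ∈ Ω, l ≠ 0 → ⟪l, X'⟫ ≠ 0) ∧
      SameTypeW Ω X X' ∧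
      (∀ w ∈ Subgroup.closure (sα '' (S : Set V)),
        SameTypeW Ω X' (w X') → w X' = X') ∧
      (-(w₀ X) = X → -(w₀ X') = X') :=
  exists_extreme_symmetric_generic_of_same_type_general S hSspan sα hsα hSrefl P hPS r α hαP w₀ hw₀W
    Ω hΩW X hXdom hXgen
end
end
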